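/- arXiv:1109.3544 — 2 statements merged into one kernel-verified Lean document; each statement's English description precedes it below -/
import Mathlib

section
/- Let (I,J) be an instance of Variable-Sized Bin Covering with unit supply such that in NFD's solution every bin that receives items is well-covered and is assigned at most two items. Then OPT(I,J) ≤ 2·NFD(I,J). -/
open scoped Classical

noncomputable section

namespace BinCov

/-- Profit of a solution `S` on the bin set `B`: a bin `i ∈ B` earns profit `p i`
if the total size of the items assigned to it is at least its demand `d i`. -/
def profit (d p s : ℕ → ℝ) (B : Finset ℕ) (S : ℕ → Finset ℕ) : ℝ :=
  ∑ i ∈ B, if d i ≤ ∑ j ∈ S i, s j then p i else 0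

/-- A solution assigns pairwise disjoint subsets of the item set `T` to the bins. -/
def IsSolution (T : Finset ℕ) (S : ℕ → Finset ℕ) : Prop :=
  (∀ i, S i ⊆ T) ∧ Pairwise fun i i' => Disjoint (S i) (S i')

/-- Optimal profit over all solutions on bins `B` and items `T`. -/
def OPT (d p s : ℕ → ℝ) (B T : Finset ℕ) : ℝ :=
  sSup (profit d p s B '' {S | IsSolution T S})

/-- Take a minimal prefix of `items` whose total size reaches `dem`;
returns this prefix together with the remaining items. -/
def takeFill (s : ℕ → ℝ) : ℝ → List ℕ → List ℕ × List ℕ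
  | _, [] => ([], [])
  | dem, j :: rest =>
    if dem ≤ s j then ([j], rest)
    else
      let q := takeFill s (dem - s j) rest
      (j :: q.1, q.2)

/-- Next Fit Decreasing on the list `bins` of bins and the list `items` of still
unassigned items (both by index, i.e. in non-increasing order of demand resp. size):
if the unassigned items cannot cover the current bin, it is left empty; otherwise a
minimal prefix of the unassigned items is assigned to it.  Returns, for each bin,
the set of items assigned to it. -/
def nfdAux (d s : ℕ → ℝ) : List ℕ → List ℕ → ℕ → Finset ℕ
  | [], _, _ => ∅
  | i :: bins, items, b =>
    if d i ≤ (items.map s).sum then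
      let q := takeFill s (d i) items
      if b = i then q.1.toFinset else nfdAux d s bins q.2 b
    else
      if b = i then ∅ else nfdAux d s bins items b

/-- The solution produced by NFD on bin set `B` and item set `T` (bins and items are
processed in increasing order of index; demands and sizes are non-increasing in the index). -/
def nfdSol (d s : ℕ → ℝ) (B T : Finset ℕ) : ℕ → Finset ℕ :=
  nfdAux d s (B.sort (· ≤ ·)) (T.sort (· ≤ ·))

/-- The total size `u i` that NFD assigns to bin `i`. -/
def nfdU (d s : ℕ → ℝ) (B T : Finset ℕ) (i : ℕ) : ℝ :=
  ∑ j ∈ nfdSol d s B T i, s j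

/-- The profit NFD earns (Variable-Sized Bin Covering: the profit of a bin is its demand). -/
def NFD (d s : ℕ → ℝ) (B T : Finset ℕ) : ℝ :=
  profit d d s B (nfdSol d s B T)

/-- A bin `istar` with `u istar > 0` in NFD's solution (bins `0,…,m-1`, items `T`) is
well-covered if for the smallest index `i' > istar` with `u i' = 0` (which must exist)
one has `u i ≤ 2 * d i` for all bins `i ≤ i'`. -/
def WellCovered (d s : ℕ → ℝ) (m : ℕ) (T : Finset ℕ) (istar : ℕ) : Prop :=
  istar < m ∧ 0 < nfdU d s (Finset.range m) T istar ∧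
    ∃ i', istar < i' ∧ i' < m ∧ nfdU d s (Finset.range m) T i' = 0 ∧
      (∀ i, istar < i → i < i' → nfdU d s (Finset.range m) T i ≠ 0) ∧
      ∀ i ≤ i', nfdU d s (Finset.range m) T i ≤ 2 * d i

/-- `istar` is the head of the instance: letting `i0` be the smallest index of a non-empty
bin of NFD's solution that is not well-covered, and `i1 ≥ i0` the smallest index with
`u (i1+1) = 0`, the head is the largest index `istar ≤ i1` with `u istar > 2 * d istar`. -/
def IsHead (d s : ℕ → ℝ) (m : ℕ) (T : Finset ℕ) (istar : ℕ) : Prop :=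
  ∃ i0 i1,
    i0 < m ∧ 0 < nfdU d s (Finset.range m) T i0 ∧ ¬ WellCovered d s m T i0 ∧
    (∀ i < i0, 0 < nfdU d s (Finset.range m) T i → WellCovered d s m T i) ∧
    i0 ≤ i1 ∧ nfdU d s (Finset.range m) T (i1 + 1) = 0 ∧
    (∀ i, i0 ≤ i → i < i1 → nfdU d s (Finset.range m) T (i + 1) ≠ 0) ∧
    istar ≤ i1 ∧ 2 * d istar < nfdU d s (Finset.range m) T istar ∧
    (∀ i ≤ i1, 2 * d i < nfdU d s (Finset.range m) T i → i ≤ istar)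

/-- The inner loop of `ALG*` on one bin: `dcap` is the bin's demand (items are admissible iff
their size is at most `dcap`), `space` is the part of the demand not yet covered, and `rem j`
is the still unassigned part of item `j` (items `0,…,n-1`, sizes non-increasing in the index).
While the bin is not covered and some admissible item is not fully assigned, the largest such
item (i.e. the one of smallest index) is taken and its remaining part is assigned to the bin,
splitting it so that the bin is exactly covered if it would overflow.
Returns the updated remainders together with the total amount assigned to the bin. -/
def fillBin (s : ℕ → ℝ) (n : ℕ) (dcap : ℝ) : ℕ → ℝ → (ℕ → ℝ) → (ℕ → ℝ) × ℝ
  | 0, _, rem => (rem, 0)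
  | fuel + 1, space, rem =>
    if h : ∃ j, j < n ∧ s j ≤ dcap ∧ 0 < rem j then
      let j := Nat.find h
      if rem j ≤ space then
        let q := fillBin s n dcap fuel (space - rem j) (Function.update rem j 0)
        (q.1, q.2 + rem j)
      else
        (Function.update rem j (rem j - space), space)
    else (rem, 0)

/-- The outer loop of `ALG*`: the bins are processed in the given order (non-increasing
efficiency); returns the total amount assigned to each bin. -/
def algStarFillAux (d s : ℕ → ℝ) (n : ℕ) : List ℕ → (ℕ → ℝ) → ℕ → ℝ
  | [], _, _ => 0
  | i :: bins, rem, b =>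
    let q := fillBin s n (d i) n (d i) rem
    if b = i then q.2 else algStarFillAux d s n bins q.1 b

/-- The total amount `ALG*` assigns to each bin, on the instance with bins `0,…,m-1`
(in non-increasing order of efficiency) and items `0,…,n-1` (in non-increasing order of size). -/
def algStarFill (m n : ℕ) (d s : ℕ → ℝ) : ℕ → ℝ :=
  algStarFillAux d s n (List.range m) fun j => if j < n then s j else 0

/-- The modified profit `p*` of the solution produced by `ALG*`. -/
def algStarPStar (m n : ℕ) (d p s : ℕ → ℝ) : ℝ :=
  ∑ i ∈ Finset.range m, p i * min (algStarFill m n d s i / d i) 1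

/-- The optimum of the linear program for the modified Bin Covering problem. -/
def LPOpt (m n : ℕ) (d p s : ℕ → ℝ) : ℝ :=
  sSup {v : ℝ | ∃ y : ℕ → ℝ, ∃ x : ℕ → ℕ → ℝ,
    (∀ i < m, y i ≤ (∑ j ∈ Finset.range n, x j i) / d i) ∧
    (∀ j < n, ∑ i ∈ Finset.range m, x j i ≤ s j) ∧
    (∀ i, 0 ≤ y i ∧ y i ≤ 1) ∧
    (∀ j i, 0 ≤ x j i) ∧
    (∀ j < n, ∀ i < m, d i < s j → x j i = 0) ∧
    v = ∑ i ∈ Finset.range m, p i * y i}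

/-- A solution of the modified Bin Covering problem, assigning item parts from the
finite set `P` (part `q ∈ P` belongs to item `itm q`) to the bins `0,…,m-1`;
a part may only be assigned to a bin to which its item is admissible. -/
def IsPartSolution (m : ℕ) (d s : ℕ → ℝ) (itm : ℕ → ℕ) (P : Finset ℕ) (S : ℕ → Finset ℕ) : Prop :=
  (∀ i, S i ⊆ P) ∧ (Pairwise fun i i' => Disjoint (S i) (S i')) ∧
  (∀ i < m, ∀ q ∈ S i, s (itm q) ≤ d i) ∧ (∀ i, m ≤ i → S i = ∅)

/-- The modified profit `p*` of a solution, where `psz q` is the size of part `q`. -/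
def pStarParts (m : ℕ) (d p psz : ℕ → ℝ) (S : ℕ → Finset ℕ) : ℝ :=
  ∑ i ∈ Finset.range m, p i * min ((∑ q ∈ S i, psz q) / d i) 1

/-- A solution of the modified Bin Covering problem is maximal if there are no two distinct
bins `i`, `i'` with `0 < s(S_i) < d_i`, `0 < s(S_i') < d_i'` and `e_i ≤ e_i'` such that
some item of `S_i` is admissible to bin `i'`. -/
def MaximalMod (m : ℕ) (d p s : ℕ → ℝ) (S : ℕ → Finset ℕ) : Prop :=
  ¬ ∃ i i', i < m ∧ i' < m ∧ i ≠ i' ∧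
      (0 < ∑ j ∈ S i, s j) ∧ (∑ j ∈ S i, s j) < d i ∧
      (0 < ∑ j ∈ S i', s j) ∧ (∑ j ∈ S i', s j) < d i' ∧
      p i / d i ≤ p i' / d i' ∧ ∃ j ∈ S i, s j ≤ d i'

/-- A solution induced by a matching in the bipartite graph on bins and items with an
edge `ij` whenever `s j > d i`: every bin receives at most one item, and any item
assigned to a bin covers it singularly. -/
def IsMatchingSol (m n : ℕ) (d s : ℕ → ℝ) (S : ℕ → Finset ℕ) : Prop :=
  IsSolution (Finset.range n) S ∧ (∀ i, (S i).card ≤ 1) ∧ ∀ i < m, ∀ j ∈ S i, d i < s j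

end BinCov

namespace BinCov

private def covF (d s : ℕ → ℝ) (c : ℕ) (A : Finset ℕ) : ℝ :=
  if d c ≤ ∑ j ∈ A, s j then d c else 0

private lemma covF_nonneg {d : ℕ → ℝ} (s : ℕ → ℝ) {c : ℕ} (h : 0 ≤ d c) (A : Finset ℕ) :
    0 ≤ covF d s c A := by
  unfold covF; split <;> simp [h]

private lemma covF_le {d : ℕ → ℝ} (s : ℕ → ℝ) {c : ℕ} (h : 0 ≤ d c) (A : Finset ℕ) :
    covF d s c A ≤ d c := by
  unfold covF; split <;> simp [h]

private lemma covF_mono {d s : ℕ → ℝ} {c : ℕ} (h : 0 ≤ d c) {A B : Finset ℕ}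
    (hAB : (∑ j ∈ A, s j) ≤ ∑ j ∈ B, s j) : covF d s c A ≤ covF d s c B := by
  unfold covF
  by_cases h1 : d c ≤ ∑ j ∈ A, s j
  · rw [if_pos h1, if_pos (le_trans h1 hAB)]
  · rw [if_neg h1]; split <;> simp [h]

private lemma takeFill_append (s : ℕ → ℝ) : ∀ (l : List ℕ) (dem : ℝ),
    (takeFill s dem l).1 ++ (takeFill s dem l).2 = l
  | [], _ => rfl
  | j :: rest, dem => by
    by_cases h : dem ≤ s j
    · simp [takeFill, h]
    · simp only [takeFill, if_neg h, List.cons_append, List.cons.injEq, true_and]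
      exact takeFill_append s rest (dem - s j)

private lemma takeFill_sum (s : ℕ → ℝ) : ∀ (l : List ℕ) (dem : ℝ),
    dem ≤ (l.map s).sum → dem ≤ (((takeFill s dem l).1).map s).sum
  | [], dem, h => by simpa [takeFill] using h
  | j :: rest, dem, h => by
    by_cases hj : dem ≤ s j
    · simpa [takeFill, hj] using hj
    · have h' : dem - s j ≤ (rest.map s).sum := by
        simp only [List.map_cons, List.sum_cons] at h; linarith
      have hrec := takeFill_sum s rest (dem - s j) h'
      simp only [takeFill, if_neg hj, List.map_cons, List.sum_cons]
      linarith

private lemma sum_map_add3 (g p qq : ℕ → ℝ) : ∀ (l : List ℕ),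
    (l.map fun c => g c + p c + qq c).sum = (l.map g).sum + (l.map p).sum + (l.map qq).sum
  | [] => by simp
  | a :: l => by
    simp only [List.map_cons, List.sum_cons, sum_map_add3 g p qq l]; ring

private lemma sum_map_ite (c1 : ℕ) (K : ℝ) : ∀ (l : List ℕ), l.Nodup →
    (l.map fun c => if c = c1 then K else 0).sum = if c1 ∈ l then K else 0
  | [], _ => by simp
  | a :: l, h => by
    obtain ⟨hal, hnd⟩ := List.nodup_cons.mp h
    rw [List.map_cons, List.sum_cons, sum_map_ite c1 K l hnd]
    by_cases ha : a = c1
    · subst ha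
      simp [hal]
    · simp [List.mem_cons, ha, Ne.symm ha]

private lemma sum_helper (d : ℕ → ℝ) (f g : ℕ → ℝ) (c1 c2 : ℕ) (K : ℝ) :
    ∀ (tl : List ℕ), tl.Nodup →
    (∀ c ∈ tl, f c ≤ g c + (if c = c1 then K else 0) + (if c = c2 then K else 0)) →
    (tl.map f).sum ≤ (tl.map g).sum + (if c1 ∈ tl then K else 0) + (if c2 ∈ tl then K else 0) := by
  intro tl hnd hterm
  have h1 : (tl.map f).sum ≤
      (tl.map (fun c => g c + (if c = c1 then K else 0) + (if c = c2 then K else 0))).sum :=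
    List.sum_le_sum hterm
  rw [sum_map_add3, sum_map_ite c1 K tl hnd, sum_map_ite c2 K tl hnd] at h1
  exact h1

private lemma sum_subset_le (s : ℕ → ℝ) (l : List ℕ) (hl : l.Nodup)
    (h0 : ∀ j ∈ l, 0 ≤ s j) (A : Finset ℕ) (hA : A ⊆ l.toFinset) :
    (∑ j ∈ A, s j) ≤ (l.map s).sum := by
  rw [← List.sum_toFinset s hl]
  exact Finset.sum_le_sum_of_subset_of_nonneg hA
    (fun j hj _ => h0 j (List.mem_toFinset.mp hj))

private lemma sum_map_nonneg (f : ℕ → ℝ) (l : List ℕ) (h : ∀ c ∈ l, 0 ≤ f c) :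
    0 ≤ (l.map f).sum :=
  List.sum_nonneg (fun x hx => by obtain ⟨c, hc, rfl⟩ := List.mem_map.mp hx; exact h c hc)


private lemma main_ineq (d s : ℕ → ℝ) :
    ∀ (bins : List ℕ) (items : List ℕ),
      bins.Pairwise (fun a b => a ≠ b ∧ d b ≤ d a) →
      (∀ b ∈ bins, 0 ≤ d b) →
      items.Pairwise (fun a b => s b ≤ s a) →
      items.Nodup →
      (∀ j ∈ items, 0 ≤ s j) →
      (∀ b ∈ bins, (nfdAux d s bins items b).card ≤ 2) →
      ∀ (S : ℕ → Finset ℕ),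
      (∀ c, S c ⊆ items.toFinset) →
      (∀ a b : ℕ, a ≠ b → Disjoint (S a) (S b)) →
      (bins.map fun c => covF d s c (S c)).sum ≤
        2 * (bins.map fun c => covF d s c (nfdAux d s bins items c)).sum := by
  intro bins
  induction bins with
  | nil => intro items _ _ _ _ _ _ S _ _; simp
  | cons i tl IH =>
    intro items hb hd0 hi hin hs0 hall S hS1 hS2
    obtain ⟨hbhead, hbtl⟩ := List.pairwise_cons.mp hb
    have hitl : i ∉ tl := fun h => (hbhead i h).1 rfl
    have hdmono : ∀ b ∈ tl, d b ≤ d i := fun b h => (hbhead b h).2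
    have hd0i : 0 ≤ d i := hd0 i List.mem_cons_self
    have hd0tl : ∀ b ∈ tl, 0 ≤ d b := fun b h => hd0 b (List.mem_cons_of_mem i h)
    have htlnd : tl.Nodup := List.Pairwise.imp (fun h => h.1) hbtl
    by_cases hcov : d i ≤ (items.map s).sum
    · -- NFD covers bin i
      cases items with
      | nil =>
        -- degenerate: no items at all
        have hLHS : (List.map (fun c => covF d s c (S c)) (i :: tl)).sum ≤
            (List.map (fun _ => (0:ℝ)) (i :: tl)).sum := by
          apply List.sum_le_sum
          intro c hc
          have hSc : S c = ∅ := Finset.subset_empty.mp (by simpa using hS1 c)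
          unfold covF
          rw [hSc]
          rw [Finset.sum_empty]
          split
          · next h => exact h
          · exact le_refl 0
        have hRHS : 0 ≤ (List.map (fun c => covF d s c (nfdAux d s (i :: tl) [] c)) (i :: tl)).sum := by
          apply sum_map_nonneg
          intro c hc
          exact covF_nonneg s (hd0 c hc) _
        simp only [List.map_const', List.sum_replicate, smul_zero] at hLHS
        linarith
      | cons x r =>
        obtain ⟨hxr, hinr⟩ := List.nodup_cons.mp hin
        have hirP : r.Pairwise (fun a b => s b ≤ s a) := hi.of_cons
        have hs0r : ∀ j ∈ r, 0 ≤ s j := fun j hj => hs0 j (List.mem_cons_of_mem x hj)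
        by_cases h1 : d i ≤ s x
        · -- block is [x]
          have htf : takeFill s (d i) (x :: r) = ([x], r) := by
            simp [takeFill, h1]
          have hhead : nfdAux d s (i :: tl) (x :: r) i = {x} := by
            simp only [nfdAux]
            rw [if_pos hcov, if_pos trivial, htf]
            simp
          have htail : ∀ b ∈ tl, nfdAux d s (i :: tl) (x :: r) b = nfdAux d s tl r b := by
            intro b hbm
            have hbi : b ≠ i := fun h => hitl (h ▸ hbm)
            simp only [nfdAux]
            rw [if_pos hcov, if_neg hbi, htf]
          obtain ⟨c1, hc1⟩ : ∃ c1, ∀ c ∈ tl, c ≠ c1 → x ∉ S c := by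
            by_cases hx : ∃ c ∈ tl, x ∈ S c
            · obtain ⟨c0, hc0tl, hc0x⟩ := hx
              exact ⟨c0, fun c hc hne hxc =>
                (Finset.disjoint_left.mp (hS2 c c0 hne) hxc) hc0x⟩
            · exact ⟨i, fun c hc _ hxc => hx ⟨c, hc, hxc⟩⟩
          set S' : ℕ → Finset ℕ := fun c => if c = c1 then ∅ else S c \ {x} with hS'def
          have hS1' : ∀ c, S' c ⊆ r.toFinset := by
            intro c j hj
            simp only [hS'def] at hj
            split at hj
            · simp at hj
            · obtain ⟨hj1, hj2⟩ := Finset.mem_sdiff.mp hj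
              have hmem : j ∈ (x :: r).toFinset := hS1 c hj1
              rw [List.toFinset_cons, Finset.mem_insert] at hmem
              rcases hmem with h | h
              · exact absurd (by simpa using h : j ∈ ({x} : Finset ℕ)) hj2
              · exact h
          have hS2' : ∀ a b : ℕ, a ≠ b → Disjoint (S' a) (S' b) := by
            have hsub : ∀ c, S' c ⊆ S c := by
              intro c
              simp only [hS'def]
              split
              · exact Finset.empty_subset _
              · exact Finset.sdiff_subset
            exact fun a b hab => Finset.disjoint_of_subset_left (hsub a)
              (Finset.disjoint_of_subset_right (hsub b) (hS2 a b hab))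
          have hallr : ∀ b ∈ tl, (nfdAux d s tl r b).card ≤ 2 := by
            intro b hbm
            rw [← htail b hbm]
            exact hall b (List.mem_cons_of_mem i hbm)
          have hIH := IH r hbtl hd0tl hirP hinr hs0r hallr S' hS1' hS2'
          have hterm : ∀ c ∈ tl, covF d s c (S c) ≤ covF d s c (S' c) +
              (if c = c1 then d i else 0) + (if c = i then d i else 0) := by
            intro c hc
            have hci : c ≠ i := fun h => hitl (h ▸ hc)
            by_cases hcc : c = c1
            · rw [if_pos hcc, if_neg hci]
              have hA := covF_le s (hd0tl c hc) (S c)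
              have hB := covF_nonneg s (hd0tl c hc) (S' c)
              have hC := hdmono c hc
              linarith
            · have hxc : x ∉ S c := hc1 c hc hcc
              have hSc : S' c = S c := by
                simp only [hS'def, if_neg hcc]
                rw [Finset.sdiff_eq_self_iff_disjoint]
                simpa using hxc
              rw [hSc, if_neg hcc, if_neg hci]
              simp
          have hsum := sum_helper d (fun c => covF d s c (S c)) (fun c => covF d s c (S' c))
            c1 i (d i) tl htlnd hterm
          have hRHShead : covF d s i ({x} : Finset ℕ) = d i := by
            unfold covF
            rw [if_pos (by simpa using h1)]
          have hRHStail : (tl.map fun c => covF d s c (nfdAux d s (i::tl) (x::r) c)).sum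
              = (tl.map fun c => covF d s c (nfdAux d s tl r c)).sum := by
            congr 1
            exact List.map_congr_left (fun b hbm => by rw [htail b hbm])
          have hT1 : (if c1 ∈ tl then d i else 0) ≤ d i := by split <;> linarith
          have hT2 : (if i ∈ tl then d i else 0) = 0 := if_neg hitl
          have hheadS : covF d s i (S i) ≤ d i := covF_le s hd0i (S i)
          simp only [List.map_cons, List.sum_cons, hhead, hRHShead]
          rw [hRHStail]
          rw [hT2] at hsum
          linarith
        · -- block is [x, y]
          have htf : takeFill s (d i) (x :: r) =
              (x :: (takeFill s (d i - s x) r).1, (takeFill s (d i - s x) r).2) := by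
            simp [takeFill, h1]
          set q := takeFill s (d i - s x) r with hqdef
          have happ : q.1 ++ q.2 = r := takeFill_append s r (d i - s x)
          have hheadeq : nfdAux d s (i :: tl) (x :: r) i = (x :: q.1).toFinset := by
            simp only [nfdAux]
            rw [if_pos hcov, if_pos trivial, htf]
          have htail : ∀ b ∈ tl, nfdAux d s (i :: tl) (x :: r) b = nfdAux d s tl q.2 b := by
            intro b hbm
            have hbi : b ≠ i := fun h => hitl (h ▸ hbm)
            simp only [nfdAux]
            rw [if_pos hcov, if_neg hbi, htf]
          have hq1nd : (x :: q.1).Nodup := by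
            rw [← happ] at hinr hxr
            exact List.nodup_cons.mpr ⟨fun h => hxr (List.mem_append_left _ h),
              (List.nodup_append.mp hinr).1⟩
          have hcard := hall i List.mem_cons_self
          rw [hheadeq] at hcard
          have hlen : (x :: q.1).length ≤ 2 := by
            rw [← List.toFinset_card_of_nodup hq1nd]
            exact hcard
          have hsumB : d i ≤ ((x :: q.1).map s).sum := by
            have hts := takeFill_sum s (x :: r) (d i) hcov
            rw [htf] at hts
            exact hts
          obtain ⟨y, hq1⟩ : ∃ y, q.1 = [y] := by
            rcases hq1e : q.1 with _ | ⟨y, _ | ⟨z, t⟩⟩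
            · exfalso
              rw [hq1e] at hsumB
              simp at hsumB
              exact h1 hsumB
            · exact ⟨y, rfl⟩
            · exfalso
              rw [hq1e] at hlen
              simp at hlen
          have hr : r = y :: q.2 := by rw [← happ, hq1]; rfl
          have hyr : y ∈ r := by rw [hr]; exact List.mem_cons_self
          have hxy : x ≠ y := fun h => hxr (h ▸ hyr)
          have hsx : s x < d i := not_le.mp h1
          have hsumB' : d i ≤ s x + s y := by
            rw [hq1] at hsumB
            simpa using hsumB
          have hBf : (x :: q.1).toFinset = {x, y} := by
            rw [hq1]
            simp [List.toFinset_cons]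
          -- tail item list facts
          have hq2P : q.2.Pairwise (fun a b => s b ≤ s a) := by
            have := hirP
            rw [hr] at this
            exact this.of_cons
          have hq2nd : q.2.Nodup := by
            have := hinr
            rw [hr] at this
            exact (List.nodup_cons.mp this).2
          have hs0q2 : ∀ j ∈ q.2, 0 ≤ s j := fun j hj => hs0r j (by rw [hr]; exact List.mem_cons_of_mem y hj)
          have hallr : ∀ b ∈ tl, (nfdAux d s tl q.2 b).card ≤ 2 := by
            intro b hbm
            rw [← htail b hbm]
            exact hall b (List.mem_cons_of_mem i hbm)
          have hmem2 : ∀ j : ℕ, j ∈ (x :: r).toFinset → j ≠ x → j ≠ y → j ∈ q.2.toFinset := by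
            intro j hj hjx hjy
            rw [hr] at hj
            simp only [List.toFinset_cons, Finset.mem_insert] at hj
            rcases hj with h | h | h
            · exact absurd h hjx
            · exact absurd h hjy
            · exact h
          have hRHShead : covF d s i ((x :: q.1).toFinset) = d i := by
            unfold covF
            rw [if_pos]
            rw [List.sum_toFinset s hq1nd]
            exact hsumB
          have hRHStail : (tl.map fun c => covF d s c (nfdAux d s (i::tl) (x::r) c)).sum
              = (tl.map fun c => covF d s c (nfdAux d s tl q.2 c)).sum := by
            congr 1
            exact List.map_congr_left (fun b hbm => by rw [htail b hbm])
          -- choose holders of x and y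
          obtain ⟨c1, hc1d, hc1⟩ : ∃ c1, (c1 = i ∨ (c1 ∈ tl ∧ x ∈ S c1)) ∧
              (∀ c ∈ tl, c ≠ c1 → x ∉ S c) := by
            by_cases hx : ∃ c ∈ tl, x ∈ S c
            · obtain ⟨c0, hc0tl, hc0x⟩ := hx
              exact ⟨c0, Or.inr ⟨hc0tl, hc0x⟩, fun c hc hne hxc =>
                (Finset.disjoint_left.mp (hS2 c c0 hne) hxc) hc0x⟩
            · exact ⟨i, Or.inl rfl, fun c hc _ hxc => hx ⟨c, hc, hxc⟩⟩
          obtain ⟨c2, hc2d, hc2⟩ : ∃ c2, (c2 = i ∨ (c2 ∈ tl ∧ y ∈ S c2)) ∧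
              (∀ c ∈ tl, c ≠ c2 → y ∉ S c) := by
            by_cases hy : ∃ c ∈ tl, y ∈ S c
            · obtain ⟨c0, hc0tl, hc0y⟩ := hy
              exact ⟨c0, Or.inr ⟨hc0tl, hc0y⟩, fun c hc hne hyc =>
                (Finset.disjoint_left.mp (hS2 c c0 hne) hyc) hc0y⟩
            · exact ⟨i, Or.inl rfl, fun c hc _ hyc => hy ⟨c, hc, hyc⟩⟩
          by_cases hboost : (d i ≤ ∑ j ∈ S i, s j) ∧ c1 ≠ i ∧ c2 ≠ i ∧ c1 ≠ c2
          · -- the boosted exchange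
            obtain ⟨hSi, hc1i, hc2i, hc12⟩ := hboost
            have hc1tl : c1 ∈ tl ∧ x ∈ S c1 := hc1d.resolve_left hc1i
            have hc2tl : c2 ∈ tl ∧ y ∈ S c2 := hc2d.resolve_left hc2i
            have hxSi : x ∉ S i := fun h =>
              (Finset.disjoint_left.mp (hS2 c1 i hc1i) hc1tl.2) h
            have hySi : y ∉ S i := fun h =>
              (Finset.disjoint_left.mp (hS2 c2 i hc2i) hc2tl.2) h
            have hySc1 : y ∉ S c1 := fun h =>
              (Finset.disjoint_left.mp (hS2 c1 c2 hc12) h) hc2tl.2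
            set S' : ℕ → Finset ℕ := fun c => if c = c2 ∨ c = i then ∅
              else if c = c1 then ((S c1).erase x) ∪ S i else S c \ {x, y} with hS'def
            have hS'c1 : S' c1 = ((S c1).erase x) ∪ S i := by
              simp only [hS'def]
              rw [if_neg (by tauto), if_pos trivial]
            have hS1' : ∀ c, S' c ⊆ q.2.toFinset := by
              intro c
              by_cases hcc : c = c2 ∨ c = i
              · simp only [hS'def]
                rw [if_pos hcc]
                exact Finset.empty_subset _
              · by_cases hcc1 : c = c1
                · rw [hcc1, hS'c1]
                  intro j hj
                  rcases Finset.mem_union.mp hj with h | h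
                  · obtain ⟨hjx, hjc1⟩ := Finset.mem_erase.mp h
                    exact hmem2 j (hS1 c1 hjc1) hjx (fun hh => hySc1 (hh ▸ hjc1))
                  · exact hmem2 j (hS1 i h) (fun hh => hxSi (hh ▸ h)) (fun hh => hySi (hh ▸ h))
                · have hSc : S' c = S c \ {x, y} := by
                    simp only [hS'def]
                    rw [if_neg hcc, if_neg hcc1]
                  rw [hSc]
                  intro j hj
                  obtain ⟨hj1, hj2⟩ := Finset.mem_sdiff.mp hj
                  simp only [Finset.mem_insert, Finset.mem_singleton] at hj2
                  push_neg at hj2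
                  exact hmem2 j (hS1 c hj1) hj2.1 hj2.2
            have hS2' : ∀ a b : ℕ, a ≠ b → Disjoint (S' a) (S' b) := by
              have hgen : ∀ c, c ≠ c1 → S' c ⊆ S c := by
                intro c hcne
                by_cases hcc : c = c2 ∨ c = i
                · simp only [hS'def]
                  rw [if_pos hcc]
                  exact Finset.empty_subset _
                · simp only [hS'def]
                  rw [if_neg hcc, if_neg hcne]
                  exact Finset.sdiff_subset
              have hc1sub : S' c1 ⊆ S c1 ∪ S i := by
                rw [hS'c1]
                exact Finset.union_subset_union (Finset.erase_subset _ _) (subset_refl _)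
              have key : ∀ b : ℕ, b ≠ c1 → Disjoint (S' c1) (S' b) := by
                intro b hb
                by_cases hb2 : b = c2 ∨ b = i
                · have : S' b = ∅ := by simp only [hS'def]; rw [if_pos hb2]
                  rw [this]
                  exact Finset.disjoint_empty_right _
                · push_neg at hb2
                  apply Finset.disjoint_of_subset_left hc1sub
                  apply Finset.disjoint_of_subset_right (hgen b hb)
                  rw [Finset.disjoint_union_left]
                  exact ⟨hS2 c1 b (fun h => hb h.symm),
                    hS2 i b (fun h => hb2.2 h.symm)⟩
              intro a b hab
              rcases eq_or_ne a c1 with ha | ha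
              · subst ha
                exact key b (fun h => hab h.symm)
              · rcases eq_or_ne b c1 with hbb | hbb
                · subst hbb
                  exact (key a ha).symm
                · exact Finset.disjoint_of_subset_left (hgen a ha)
                    (Finset.disjoint_of_subset_right (hgen b hbb) (hS2 a b hab))
            have hIH := IH q.2 hbtl hd0tl hq2P hq2nd hs0q2 hallr S' hS1' hS2'
            -- the boost keeps c1 covered
            have hdisj : Disjoint ((S c1).erase x) (S i) :=
              Finset.disjoint_of_subset_left (Finset.erase_subset _ _) (hS2 c1 i hc1i)
            have hsum' : ∑ j ∈ ((S c1).erase x ∪ S i), s j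
                = ((∑ j ∈ S c1, s j) - s x) + ∑ j ∈ S i, s j := by
              rw [Finset.sum_union hdisj]
              have := Finset.sum_erase_add (S c1) s hc1tl.2
              linarith
            have hc1cov : covF d s c1 (S c1) ≤ covF d s c1 (S' c1) := by
              rw [hS'c1]
              apply covF_mono (hd0tl c1 hc1tl.1)
              rw [hsum']
              linarith
            have hterm : ∀ c ∈ tl, covF d s c (S c) ≤ covF d s c (S' c) +
                (if c = c2 then d i else 0) + (if c = i then d i else 0) := by
              intro c hc
              have hci : c ≠ i := fun h => hitl (h ▸ hc)
              by_cases hcc2 : c = c2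
              · rw [if_pos hcc2, if_neg hci]
                have hA := covF_le s (hd0tl c hc) (S c)
                have hB := covF_nonneg s (hd0tl c hc) (S' c)
                have hC := hdmono c hc
                linarith
              · rw [if_neg hcc2, if_neg hci]
                by_cases hcc1 : c = c1
                · subst hcc1
                  linarith [hc1cov]
                · have hSc : S' c = S c := by
                    simp only [hS'def]
                    rw [if_neg (by tauto), if_neg hcc1]
                    rw [Finset.sdiff_eq_self_iff_disjoint]
                    simp only [Finset.disjoint_insert_right, Finset.disjoint_singleton_right]
                    exact ⟨hc1 c hc hcc1, hc2 c hc hcc2⟩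
                  rw [hSc]
                  simp
            have hsum := sum_helper d (fun c => covF d s c (S c)) (fun c => covF d s c (S' c))
              c2 i (d i) tl htlnd hterm
            have hT1 : (if c2 ∈ tl then d i else 0) ≤ d i := by split <;> linarith
            have hT2 : (if i ∈ tl then d i else 0) = 0 := if_neg hitl
            have hheadS : covF d s i (S i) ≤ d i := covF_le s hd0i (S i)
            simp only [List.map_cons, List.sum_cons, hheadeq, hRHShead]
            rw [hRHStail]
            rw [hT2] at hsum
            linarith
          · -- no boost needed: drop at most two tail bins
            set c2' : ℕ := if c1 = c2 then i else c2 with hc2'def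
            have hc2'prop : ∀ c ∈ tl, c ≠ c1 → c ≠ c2' → y ∉ S c := by
              intro c hc hne1 hne2
              by_cases h12 : c1 = c2
              · exact hc2 c hc (by rw [← h12]; exact hne1)
              · exact hc2 c hc (by rwa [hc2'def, if_neg h12] at hne2)
            set S' : ℕ → Finset ℕ := fun c =>
              if c = c1 ∨ c = c2' ∨ c = i then ∅ else S c \ {x, y} with hS'def
            have hS1' : ∀ c, S' c ⊆ q.2.toFinset := by
              intro c j hj
              simp only [hS'def] at hj
              split at hj
              · simp at hj
              · obtain ⟨hj1, hj2⟩ := Finset.mem_sdiff.mp hj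
                simp only [Finset.mem_insert, Finset.mem_singleton] at hj2
                push_neg at hj2
                exact hmem2 j (hS1 c hj1) hj2.1 hj2.2
            have hS2' : ∀ a b : ℕ, a ≠ b → Disjoint (S' a) (S' b) := by
              have hsub : ∀ c, S' c ⊆ S c := by
                intro c
                simp only [hS'def]
                split
                · exact Finset.empty_subset _
                · exact Finset.sdiff_subset
              exact fun a b hab => Finset.disjoint_of_subset_left (hsub a)
                (Finset.disjoint_of_subset_right (hsub b) (hS2 a b hab))
            have hIH := IH q.2 hbtl hd0tl hq2P hq2nd hs0q2 hallr S' hS1' hS2'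
            have hterm : ∀ c ∈ tl, covF d s c (S c) ≤ covF d s c (S' c) +
                (if c = c1 then d i else 0) + (if c = c2' then d i else 0) := by
              intro c hc
              have hci : c ≠ i := fun h => hitl (h ▸ hc)
              by_cases hcc1 : c = c1
              · rw [if_pos hcc1]
                have hA := covF_le s (hd0tl c hc) (S c)
                have hB := covF_nonneg s (hd0tl c hc) (S' c)
                have hC := hdmono c hc
                have hD : (0:ℝ) ≤ if c = c2' then d i else 0 := by split <;> linarith
                linarith
              · rw [if_neg hcc1]
                by_cases hcc2 : c = c2'
                · rw [if_pos hcc2]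
                  have hA := covF_le s (hd0tl c hc) (S c)
                  have hB := covF_nonneg s (hd0tl c hc) (S' c)
                  have hC := hdmono c hc
                  linarith
                · rw [if_neg hcc2]
                  have hSc : S' c = S c := by
                    simp only [hS'def]
                    rw [if_neg (by tauto)]
                    rw [Finset.sdiff_eq_self_iff_disjoint]
                    simp only [Finset.disjoint_insert_right, Finset.disjoint_singleton_right]
                    exact ⟨hc1 c hc hcc1, hc2'prop c hc hcc1 hcc2⟩
                  rw [hSc]
                  simp
            have hsum := sum_helper d (fun c => covF d s c (S c)) (fun c => covF d s c (S' c))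
              c1 c2' (d i) tl htlnd hterm
            -- head bound: covF i (S i) + drops ≤ 2 d i
            have hheadbound : covF d s i (S i) + (if c1 ∈ tl then d i else 0) +
                (if c2' ∈ tl then d i else 0) ≤ 2 * d i := by
              by_cases hSi : d i ≤ ∑ j ∈ S i, s j
              · have hz : c1 = i ∨ c2' = i := by
                  by_cases h12 : c1 = c2
                  · right; rw [hc2'def, if_pos h12]
                  · by_cases hc1i : c1 = i
                    · left; exact hc1i
                    · right
                      rw [hc2'def, if_neg h12]
                      by_contra hc2i
                      exact hboost ⟨hSi, hc1i, hc2i, h12⟩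
                have hhead := covF_le s hd0i (S i)
                have hI1 : (if c1 ∈ tl then d i else 0) ≤ d i := by split <;> linarith
                have hI2 : (if c2' ∈ tl then d i else 0) ≤ d i := by split <;> linarith
                rcases hz with hz | hz
                · rw [hz, if_neg hitl]
                  linarith
                · rw [hz, if_neg hitl]
                  linarith
              · have hhead0 : covF d s i (S i) = 0 := by
                  unfold covF
                  rw [if_neg hSi]
                have hI1 : (if c1 ∈ tl then d i else 0) ≤ d i := by split <;> linarith
                have hI2 : (if c2' ∈ tl then d i else 0) ≤ d i := by split <;> linarith
                rw [hhead0]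
                linarith
            simp only [List.map_cons, List.sum_cons, hheadeq, hRHShead]
            rw [hRHStail]
            linarith
    · -- NFD skips bin i
      have hnfdhead : nfdAux d s (i :: tl) items i = ∅ := by
        simp only [nfdAux]
        rw [if_neg hcov, if_pos trivial]
      have htail : ∀ b ∈ tl, nfdAux d s (i :: tl) items b = nfdAux d s tl items b := by
        intro b hbm
        have hbi : b ≠ i := fun h => hitl (h ▸ hbm)
        simp only [nfdAux]
        rw [if_neg hcov, if_neg hbi]
      have hallr : ∀ b ∈ tl, (nfdAux d s tl items b).card ≤ 2 := by
        intro b hbm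
        rw [← htail b hbm]
        exact hall b (List.mem_cons_of_mem i hbm)
      have hIH := IH items hbtl hd0tl hi hin hs0 hallr S hS1 hS2
      have hheadS : covF d s i (S i) = 0 := by
        have hsub : (∑ j ∈ S i, s j) ≤ (items.map s).sum :=
          sum_subset_le s items hin hs0 (S i) (hS1 i)
        unfold covF
        rw [if_neg (by push_neg at hcov; linarith)]
      have hRHStail : (tl.map fun c => covF d s c (nfdAux d s (i::tl) items c)).sum
          = (tl.map fun c => covF d s c (nfdAux d s tl items c)).sum := by
        congr 1
        exact List.map_congr_left (fun b hbm => by rw [htail b hbm])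
      have hRHShead : 0 ≤ covF d s i (nfdAux d s (i :: tl) items i) :=
        covF_nonneg s hd0i _
      simp only [List.map_cons, List.sum_cons]
      rw [hRHStail, hheadS]
      linarith


/- STATEMENT 12 -/
theorem stmt12 (m n : ℕ) (d s : ℕ → ℝ)
    (hd : ∀ i < m, 0 < d i) (hdm : ∀ i i', i ≤ i' → i' < m → d i' ≤ d i)
    (hs : ∀ j < n, 0 < s j) (hsm : ∀ j j', j ≤ j' → j' < n → s j' ≤ s j)
    (hall : ∀ i < m, (nfdSol d s (Finset.range m) (Finset.range n) i).Nonempty →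
      WellCovered d s m (Finset.range n) i ∧
        (nfdSol d s (Finset.range m) (Finset.range n) i).card ≤ 2) :
    OPT d d s (Finset.range m) (Finset.range n) ≤
      2 * NFD d s (Finset.range m) (Finset.range n) := by
  classical
  have hfrm : (List.range m).toFinset = Finset.range m := by ext x; simp
  have hfrn : (List.range n).toFinset = Finset.range n := by ext x; simp
  have hnfd : nfdSol d s (Finset.range m) (Finset.range n)
      = nfdAux d s (List.range m) (List.range n) := by
    unfold nfdSol
    rw [Finset.sort_range, Finset.sort_range]
  have hNFDeq : NFD d s (Finset.range m) (Finset.range n)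
      = ((List.range m).map fun c =>
          covF d s c (nfdAux d s (List.range m) (List.range n) c)).sum := by
    unfold NFD profit covF
    rw [hnfd, ← hfrm, List.sum_toFinset _ List.nodup_range]
  have hNFD0 : 0 ≤ NFD d s (Finset.range m) (Finset.range n) := by
    rw [hNFDeq]
    apply sum_map_nonneg
    intro c hc
    exact covF_nonneg s (hd c (List.mem_range.mp hc)).le _
  apply Real.sSup_le _ (by linarith)
  rintro v ⟨S, hSsol, rfl⟩
  have pb : (List.range m).Pairwise (fun a b => a ≠ b ∧ d b ≤ d a) := by
    apply List.Pairwise.imp_of_mem _ (List.pairwise_lt_range : (List.range m).Pairwise (· < ·))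
    intro a b _ hbmem hab
    exact ⟨Nat.ne_of_lt hab, hdm a b hab.le (List.mem_range.mp hbmem)⟩
  have pd0 : ∀ b ∈ List.range m, 0 ≤ d b := fun b hb => (hd b (List.mem_range.mp hb)).le
  have pi : (List.range n).Pairwise (fun a b => s b ≤ s a) := by
    apply List.Pairwise.imp_of_mem _ (List.pairwise_lt_range : (List.range n).Pairwise (· < ·))
    intro a b _ hbmem hab
    exact hsm a b hab.le (List.mem_range.mp hbmem)
  have ps0 : ∀ j ∈ List.range n, 0 ≤ s j := fun j hj => (hs j (List.mem_range.mp hj)).le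
  have phall : ∀ b ∈ List.range m,
      (nfdAux d s (List.range m) (List.range n) b).card ≤ 2 := by
    intro b hb
    rw [← hnfd]
    by_cases hne : (nfdSol d s (Finset.range m) (Finset.range n) b).Nonempty
    · exact (hall b (List.mem_range.mp hb) hne).2
    · rw [Finset.not_nonempty_iff_eq_empty.mp hne]
      simp
  have pS1 : ∀ c, S c ⊆ (List.range n).toFinset := by
    intro c
    rw [hfrn]
    exact hSsol.1 c
  have pS2 : ∀ a b : ℕ, a ≠ b → Disjoint (S a) (S b) := fun a b hab => hSsol.2 hab
  have hmain := main_ineq d s (List.range m) (List.range n) pb pd0 pi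
    List.nodup_range ps0 phall S pS1 pS2
  have hPeq : profit d d s (Finset.range m) S
      = ((List.range m).map fun c => covF d s c (S c)).sum := by
    unfold profit covF
    rw [← hfrm, List.sum_toFinset _ List.nodup_range]
  rw [hPeq, hNFDeq]
  exact hmain

end BinCov
end
end

section
/- Let 2 ≤ m ≤ n and let s'_1,…,s'_n be positive integers. Consider the Variable-Sized Bin Covering instance (I,J) with unit supply defined by: items 1,…,n of sizes s_j = 2·m·s'_j, items n+1,…,n+m−2 each of size 1, s := Σ_{j=1}^{n} s_j = 2m·Σ_{j=1}^{n} s'_j, and bins of demands d_1 = d_2 = s/2 and d_3 = … = d_m = 1 (with p_i = d_i). Then: (i) if there exists L ⊆ {1,…,n} with Σ_{j∈L} s'_j = Σ_{j∉L} s'_j, then OPT(I,J) = s + m − 2; (ii) if no such L exists, then OPT(I,J) ≤ s/2 + m − 2. -/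
open scoped Classical

noncomputable section

namespace BinCov

/- STATEMENT 19 -/
lemma sum_split (n m : ℕ) (s' : ℕ → ℕ) (X : Finset ℕ) :
    ∑ j ∈ X, (if j < n then 2 * (m:ℝ) * ((s' j : ℕ) : ℝ) else 1)
      = 2 * (m:ℝ) * ((∑ j ∈ X.filter (fun j => j < n), s' j : ℕ) : ℝ)
        + ((X.filter (fun j => ¬ j < n)).card : ℝ) := by
  rw [← Finset.sum_filter_add_sum_filter_not X (fun j => j < n)]
  congr 1
  · rw [Finset.sum_congr rfl (fun j hj => if_pos (Finset.mem_filter.mp hj).2)]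
    push_cast
    rw [Finset.mul_sum]
  · rw [Finset.sum_congr rfl (fun j hj => if_neg (Finset.mem_filter.mp hj).2)]
    simp


theorem stmt19 (m n : ℕ) (hm : 2 ≤ m) (hmn : m ≤ n)
    (s' : ℕ → ℕ) (hs' : ∀ j < n, 0 < s' j) :
    ((∃ L ⊆ Finset.range n, ∑ j ∈ L, s' j = ∑ j ∈ Finset.range n \ L, s' j) →
      OPT (fun i => if i < 2 then ((2 * m * ∑ j ∈ Finset.range n, s' j : ℕ) : ℝ) / 2 else 1)
          (fun i => if i < 2 then ((2 * m * ∑ j ∈ Finset.range n, s' j : ℕ) : ℝ) / 2 else 1)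
          (fun j => if j < n then 2 * m * ((s' j : ℕ) : ℝ) else 1)
          (Finset.range m) (Finset.range (n + (m - 2)))
        = ((2 * m * ∑ j ∈ Finset.range n, s' j : ℕ) : ℝ) + m - 2) ∧
    ((¬ ∃ L ⊆ Finset.range n, ∑ j ∈ L, s' j = ∑ j ∈ Finset.range n \ L, s' j) →
      OPT (fun i => if i < 2 then ((2 * m * ∑ j ∈ Finset.range n, s' j : ℕ) : ℝ) / 2 else 1)
          (fun i => if i < 2 then ((2 * m * ∑ j ∈ Finset.range n, s' j : ℕ) : ℝ) / 2 else 1)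
          (fun j => if j < n then 2 * m * ((s' j : ℕ) : ℝ) else 1)
          (Finset.range m) (Finset.range (n + (m - 2)))
        ≤ ((2 * m * ∑ j ∈ Finset.range n, s' j : ℕ) : ℝ) / 2 + m - 2) := by
  set σ : ℕ := ∑ j ∈ Finset.range n, s' j with hσ
  set d : ℕ → ℝ := fun i => if i < 2 then ((2 * m * σ : ℕ) : ℝ) / 2 else 1 with hd
  set sf : ℕ → ℝ := fun j => if j < n then 2 * m * ((s' j : ℕ) : ℝ) else 1 with hsf
  set T : Finset ℕ := Finset.range (n + (m - 2)) with hT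
  have hsfeq : ∀ X : Finset ℕ, ∑ j ∈ X, sf j
      = 2 * (m:ℝ) * ((∑ j ∈ X.filter (fun j => j < n), s' j : ℕ) : ℝ)
        + ((X.filter (fun j => ¬ j < n)).card : ℝ) := by
    intro X
    rw [← sum_split n m s' X]
  have hdnn : ∀ i, 0 ≤ d i := by
    intro i
    simp only [hd]
    split_ifs
    · positivity
    · norm_num
  -- sum of demands
  have hDsum : ∑ i ∈ Finset.range m, d i = ((2 * m * σ : ℕ) : ℝ) + m - 2 := by
    rw [Finset.range_eq_Ico, ← Finset.sum_Ico_consecutive _ (Nat.zero_le 2) hm]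
    have h1 : ∑ i ∈ Finset.Ico 0 2, d i = ((2 * m * σ : ℕ) : ℝ) := by
      rw [show Finset.Ico 0 2 = Finset.range 2 by rw [Finset.range_eq_Ico]]
      rw [Finset.sum_range_succ, Finset.sum_range_succ, Finset.sum_range_zero]
      simp only [hd]
      norm_num
    have h2 : ∑ i ∈ Finset.Ico 2 m, d i = (m : ℝ) - 2 := by
      rw [Finset.sum_congr rfl (fun i hi => show d i = 1 by
        simp only [hd]
        rw [if_neg (by have := (Finset.mem_Ico.mp hi).1; omega)])]
      rw [Finset.sum_const, Nat.card_Ico, nsmul_eq_mul, mul_one, Nat.cast_sub hm]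
      push_cast
      ring
    rw [h1, h2]; ring
  -- general upper bound
  have hub : ∀ S : ℕ → Finset ℕ, profit d d sf (Finset.range m) S
      ≤ ((2 * m * σ : ℕ) : ℝ) + m - 2 := by
    intro S
    rw [← hDsum]
    apply Finset.sum_le_sum
    intro i _
    split_ifs
    · exact le_refl _
    · exact hdnn i
  have hbdd : BddAbove (profit d d sf (Finset.range m) '' {S | IsSolution T S}) := by
    refine ⟨((2 * m * σ : ℕ) : ℝ) + m - 2, ?_⟩
    rintro v ⟨S, -, rfl⟩
    exact hub S
  have hne : (profit d d sf (Finset.range m) '' {S | IsSolution T S}).Nonempty := by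
    refine ⟨_, ⟨fun _ => (∅ : Finset ℕ), ⟨fun _ => Finset.empty_subset _,
      fun i i' _ => Finset.disjoint_empty_left _⟩, rfl⟩⟩
  constructor
  · -- part (i)
    rintro ⟨L, hL, hLsum⟩
    have hhalf : 2 * (∑ j ∈ L, s' j) = σ := by
      have h := Finset.sum_sdiff (f := s') hL
      omega
    set S : ℕ → Finset ℕ := fun i =>
      if i = 0 then L else if i = 1 then Finset.range n \ L
      else if i < m then {n + (i - 2)} else ∅ with hS
    have hSol : IsSolution T S := by
      constructor
      · intro i
        simp only [hS]
        split_ifs with h0 h1 h2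
        · exact hL.trans (by
            intro j hj
            simp only [hT, Finset.mem_range] at *
            omega)
        · intro j hj
          simp only [Finset.mem_sdiff, Finset.mem_range] at hj
          simp only [hT, Finset.mem_range]
          omega
        · intro j hj
          simp only [Finset.mem_singleton] at hj
          simp only [hT, Finset.mem_range]
          omega
        · exact Finset.empty_subset _
      · intro i i' hne'
        have hLn : ∀ j ∈ L, j < n := fun j hj => Finset.mem_range.mp (hL hj)
        simp only [hS]
        split_ifs with h1 h2 h3 h4 h5 h6 h7 h8 h9 h10 h11 h12 h13 h14 h15 <;>
          first
          | (exfalso; omega)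
          | exact Finset.disjoint_empty_right _
          | exact Finset.disjoint_empty_left _
          | exact Finset.disjoint_sdiff
          | exact Finset.sdiff_disjoint
          | (rw [Finset.disjoint_singleton_right]
             intro hmem
             first
             | (have := hLn _ hmem; omega)
             | (have := (Finset.mem_sdiff.mp hmem).1
                rw [Finset.mem_range] at this
                omega))
          | (rw [Finset.disjoint_singleton_left]
             intro hmem
             first
             | (have := hLn _ hmem; omega)
             | (have := (Finset.mem_sdiff.mp hmem).1
                rw [Finset.mem_range] at this
                omega))
          | (rw [Finset.disjoint_singleton_left, Finset.mem_singleton]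
             omega)
    have hcast : ((σ : ℕ) : ℝ) = 2 * ((∑ j ∈ L, s' j : ℕ) : ℝ) := by
      exact_mod_cast hhalf.symm
    have hval0 : ∑ j ∈ L, sf j = ((2 * m * σ : ℕ) : ℝ) / 2 := by
      rw [Finset.sum_congr rfl (fun j hj => show sf j = 2 * (m:ℝ) * ((s' j : ℕ) : ℝ) by
        simp only [hsf]
        rw [if_pos (Finset.mem_range.mp (hL hj))])]
      rw [← Finset.mul_sum]
      push_cast
      rw [show ((σ : ℕ) : ℝ) = 2 * (∑ j ∈ L, (s' j : ℝ)) by push_cast at hcast ⊢; linarith]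
      ring
    have hval1 : ∑ j ∈ Finset.range n \ L, sf j = ((2 * m * σ : ℕ) : ℝ) / 2 := by
      rw [Finset.sum_congr rfl (fun j hj => show sf j = 2 * (m:ℝ) * ((s' j : ℕ) : ℝ) by
        simp only [hsf]
        rw [if_pos (Finset.mem_range.mp (Finset.mem_sdiff.mp hj).1)])]
      rw [← Finset.mul_sum]
      have : ∑ j ∈ Finset.range n \ L, (s' j : ℝ) = ∑ j ∈ L, (s' j : ℝ) := by
        exact_mod_cast congrArg (Nat.cast : ℕ → ℝ) hLsum.symm
      rw [this]
      push_cast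
      rw [show ((σ : ℕ) : ℝ) = 2 * (∑ j ∈ L, (s' j : ℝ)) by push_cast at hcast ⊢; linarith]
      ring
    have hprof : profit d d sf (Finset.range m) S = ((2 * m * σ : ℕ) : ℝ) + m - 2 := by
      rw [← hDsum]
      apply Finset.sum_congr rfl
      intro i hi
      rw [if_pos]
      rcases Nat.lt_or_ge i 2 with h2 | h2
      · interval_cases i
        · simp only [hS, if_pos rfl]
          rw [hval0]
          simp only [hd]
          norm_num
        · simp only [hS]
          norm_num
          rw [hval1]
          simp only [hd]
          norm_num
      · have him : i < m := Finset.mem_range.mp hi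
        have : S i = {n + (i - 2)} := by
          simp only [hS]
          rw [if_neg (by omega), if_neg (by omega), if_pos him]
        rw [this]
        rw [Finset.sum_singleton]
        simp only [hd, hsf]
        rw [if_neg (by omega), if_neg (by omega)]
    apply le_antisymm
    · exact csSup_le hne (by rintro v ⟨S', -, rfl⟩; exact hub S')
    · exact le_csSup hbdd ⟨S, hSol, hprof⟩
  · -- part (ii)
    intro hno
    apply csSup_le hne
    rintro v ⟨S, hS, rfl⟩
    -- not both big bins covered
    have hkey : ¬ ((d 0 ≤ ∑ j ∈ S 0, sf j) ∧ (d 1 ≤ ∑ j ∈ S 1, sf j)) := by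
      rintro ⟨h0, h1⟩
      apply hno
      set A0 : ℕ := ∑ j ∈ (S 0).filter (fun j => j < n), s' j with hA0
      set A1 : ℕ := ∑ j ∈ (S 1).filter (fun j => j < n), s' j with hA1
      set u0 : ℕ := ((S 0).filter (fun j => ¬ j < n)).card with hu0
      set u1 : ℕ := ((S 1).filter (fun j => ¬ j < n)).card with hu1
      have hu : u0 + u1 ≤ m - 2 := by
        have hdisj : Disjoint ((S 0).filter (fun j => ¬ j < n))
            ((S 1).filter (fun j => ¬ j < n)) :=
          Finset.disjoint_filter_filter (hS.2 (by decide))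
        have hsub : ((S 0).filter (fun j => ¬ j < n)) ∪ ((S 1).filter (fun j => ¬ j < n))
            ⊆ Finset.Ico n (n + (m - 2)) := by
          intro j hj
          rcases Finset.mem_union.mp hj with hj' | hj' <;>
          · obtain ⟨hjs, hjn⟩ := Finset.mem_filter.mp hj'
            have := Finset.mem_range.mp (hS.1 _ hjs)
            exact Finset.mem_Ico.mpr ⟨by omega, by omega⟩
        calc u0 + u1 = (((S 0).filter (fun j => ¬ j < n))
              ∪ ((S 1).filter (fun j => ¬ j < n))).card := (Finset.card_union_of_disjoint hdisj).symm
          _ ≤ (Finset.Ico n (n + (m - 2))).card := Finset.card_le_card hsub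
          _ = m - 2 := by rw [Nat.card_Ico]; omega
      have hA : A0 + A1 ≤ σ := by
        have hdisj : Disjoint ((S 0).filter (fun j => j < n))
            ((S 1).filter (fun j => j < n)) :=
          Finset.disjoint_filter_filter (hS.2 (by decide))
        have hsub : ((S 0).filter (fun j => j < n)) ∪ ((S 1).filter (fun j => j < n))
            ⊆ Finset.range n := by
          intro j hj
          rcases Finset.mem_union.mp hj with hj' | hj' <;>
            exact Finset.mem_range.mpr (Finset.mem_filter.mp hj').2
        calc A0 + A1 = ∑ j ∈ ((S 0).filter (fun j => j < n))
              ∪ ((S 1).filter (fun j => j < n)), s' j := (Finset.sum_union hdisj).symm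
          _ ≤ σ := Finset.sum_le_sum_of_subset hsub
      have hcov : ∀ (k : ℕ) (A u : ℕ), (d k ≤ ∑ j ∈ S k, sf j) → k < 2 →
          A = ∑ j ∈ (S k).filter (fun j => j < n), s' j →
          u = ((S k).filter (fun j => ¬ j < n)).card →
          m * σ ≤ 2 * m * A + u := by
        intro k A u hcovk hk2 hAe hue
        have hr : ((m * σ : ℕ) : ℝ) ≤ ((2 * m * A + u : ℕ) : ℝ) := by
          rw [hsfeq (S k)] at hcovk
          simp only [hd, if_pos hk2] at hcovk
          rw [← hAe, ← hue] at hcovk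
          push_cast at hcovk ⊢
          linarith
        exact_mod_cast hr
      have h0' : m * σ ≤ 2 * m * A0 + u0 := hcov 0 A0 u0 h0 (by norm_num) hA0 hu0
      have h1' : m * σ ≤ 2 * m * A1 + u1 := hcov 1 A1 u1 h1 (by norm_num) hA1 hu1
      have hσA0 : σ ≤ 2 * A0 := by
        by_contra hcon
        push_neg at hcon
        have hc1 : 2 * m * A0 + m ≤ 2 * m * A0 + (m - 2) := by
          calc 2 * m * A0 + m = m * (2 * A0 + 1) := by ring
            _ ≤ m * σ := Nat.mul_le_mul_left m (by omega)
            _ ≤ 2 * m * A0 + u0 := h0'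
            _ ≤ 2 * m * A0 + (m - 2) := by omega
        have := Nat.add_le_add_iff_left.mp hc1
        omega
      have hσA1 : σ ≤ 2 * A1 := by
        by_contra hcon
        push_neg at hcon
        have hc1 : 2 * m * A1 + m ≤ 2 * m * A1 + (m - 2) := by
          calc 2 * m * A1 + m = m * (2 * A1 + 1) := by ring
            _ ≤ m * σ := Nat.mul_le_mul_left m (by omega)
            _ ≤ 2 * m * A1 + u1 := h1'
            _ ≤ 2 * m * A1 + (m - 2) := by omega
        have := Nat.add_le_add_iff_left.mp hc1
        omega
      have heq : 2 * A0 = σ := by omega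
      refine ⟨(S 0).filter (fun j => j < n), ?_, ?_⟩
      · intro j hj
        exact Finset.mem_range.mpr (Finset.mem_filter.mp hj).2
      · have hsub : (S 0).filter (fun j => j < n) ⊆ Finset.range n := fun j hj =>
          Finset.mem_range.mpr (Finset.mem_filter.mp hj).2
        have h := Finset.sum_sdiff (f := s') hsub
        omega
    -- bound the profit
    rw [profit, Finset.range_eq_Ico, ← Finset.sum_Ico_consecutive _ (Nat.zero_le 2) hm]
    have hrest : ∑ i ∈ Finset.Ico 2 m, (if d i ≤ ∑ j ∈ S i, sf j then d i else 0)
        ≤ (m : ℝ) - 2 := by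
      calc ∑ i ∈ Finset.Ico 2 m, (if d i ≤ ∑ j ∈ S i, sf j then d i else 0)
          ≤ ∑ i ∈ Finset.Ico 2 m, (1 : ℝ) := by
            apply Finset.sum_le_sum
            intro i hi
            have hi2 : ¬ i < 2 := by have := (Finset.mem_Ico.mp hi).1; omega
            have : d i = 1 := by simp only [hd]; rw [if_neg hi2]
            rw [this]
            split_ifs <;> norm_num
        _ = (m : ℝ) - 2 := by
            rw [Finset.sum_const, Nat.card_Ico, nsmul_eq_mul, mul_one, Nat.cast_sub hm]
            push_cast
            ring
    have hfirst : ∑ i ∈ Finset.Ico 0 2, (if d i ≤ ∑ j ∈ S i, sf j then d i else 0)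
        ≤ ((2 * m * σ : ℕ) : ℝ) / 2 := by
      rw [show Finset.Ico 0 2 = Finset.range 2 by rw [Finset.range_eq_Ico]]
      rw [Finset.sum_range_succ, Finset.sum_range_succ, Finset.sum_range_zero]
      have hd0 : d 0 = ((2 * m * σ : ℕ) : ℝ) / 2 := by simp only [hd]; norm_num
      have hd1 : d 1 = ((2 * m * σ : ℕ) : ℝ) / 2 := by simp only [hd]; norm_num
      have hnn : (0:ℝ) ≤ ((2 * m * σ : ℕ) : ℝ) / 2 := by positivity
      by_cases h0 : d 0 ≤ ∑ j ∈ S 0, sf j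
      · have h1 : ¬ d 1 ≤ ∑ j ∈ S 1, sf j := fun h1 => hkey ⟨h0, h1⟩
        rw [if_pos h0, if_neg h1, hd0]
        linarith
      · rw [if_neg h0]
        split_ifs with h1
        · rw [hd1]; linarith
        · linarith
    linarith

end BinCov
end
end
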